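/- arXiv:2202.03041 — 4 statements merged into one kernel-verified Lean document; each statement's English description precedes it below -/
import Mathlib

section
/- Let f₁ be a smooth function of y with f₁ ≠ 0, and define the Darboux transform of a function φ by φ[1] = φ_y - (f₁_y/f₁) φ. If f₁ satisfies f₁_yyy + ξ f₁_y + η f₁ = λ₁² f₁ and φ satisfies φ_yyy + ξ φ_y + η φ = λ² φ, then φ[1] satisfies φ[1]_yyy + ξ[1] φ[1]_y + η[1] φ[1] = λ² φ[1], where ξ[1] = ξ + 3 (ln f₁)_yy and η[1] = η + (ξ + (3/2)((ln f₁)_y)² + 3(ln f₁)_yy)_y. -/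
/-- One-step Darboux covariance of the third-order spectral problem
`φ_yyy + ξ φ_y + η φ = λ² φ`. -/
theorem darboux_transform_order_one
    (ξ η f₁ φ : ℝ → ℝ)
    (hξ : ContDiff ℝ (⊤ : ℕ∞) ξ) (hη : ContDiff ℝ (⊤ : ℕ∞) η)
    (hf₁ : ContDiff ℝ (⊤ : ℕ∞) f₁) (hφ : ContDiff ℝ (⊤ : ℕ∞) φ)
    (hf₁ne : ∀ y, f₁ y ≠ 0)
    (lam lam₁ : ℝ)
    (hfeq : ∀ y, iteratedDeriv 3 f₁ y + ξ y * deriv f₁ y + η y * f₁ y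
        = lam₁ ^ 2 * f₁ y)
    (hφeq : ∀ y, iteratedDeriv 3 φ y + ξ y * deriv φ y + η y * φ y
        = lam ^ 2 * φ y)
    (lf φ1 ξ1 η1 : ℝ → ℝ)
    (hlf : lf = fun y => deriv f₁ y / f₁ y)
    (hφ1 : φ1 = fun y => deriv φ y - lf y * φ y)
    (hξ1 : ξ1 = fun y => ξ y + 3 * deriv lf y)
    (hη1 : η1 = fun y => η y
        + deriv (fun z => ξ z + (3 / 2) * (lf z) ^ 2 + 3 * deriv lf z) y) :
    ∀ y, iteratedDeriv 3 φ1 y + ξ1 y * deriv φ1 y + η1 y * φ1 y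
        = lam ^ 2 * φ1 y := by
  -- downgrade to `ContDiff ℝ ∞`
  have hξ' : ContDiff ℝ (⊤ : ℕ∞) ξ := hξ.of_le (by simp)
  have hη' : ContDiff ℝ (⊤ : ℕ∞) η := hη.of_le (by simp)
  have hf' : ContDiff ℝ (⊤ : ℕ∞) f₁ := hf₁.of_le (by simp)
  have hφ' : ContDiff ℝ (⊤ : ℕ∞) φ := hφ.of_le (by simp)
  have dstep : ∀ f : ℝ → ℝ, ContDiff ℝ (⊤ : ℕ∞) f → ContDiff ℝ (⊤ : ℕ∞) (deriv f) :=
    fun f hf => (contDiff_infty_iff_deriv.mp hf).2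
  have hdf : ContDiff ℝ (⊤ : ℕ∞) (deriv f₁) := dstep _ hf'
  have hL : ContDiff ℝ (⊤ : ℕ∞) lf := by
    rw [hlf]; exact hdf.div hf' hf₁ne
  have hdL : ContDiff ℝ (⊤ : ℕ∞) (deriv lf) := dstep _ hL
  have hd2L : ContDiff ℝ (⊤ : ℕ∞) (deriv (deriv lf)) := dstep _ hdL
  have hdφ : ContDiff ℝ (⊤ : ℕ∞) (deriv φ) := dstep _ hφ'
  have hd2φ : ContDiff ℝ (⊤ : ℕ∞) (deriv (deriv φ)) := dstep _ hdφ
  have hdξ : ContDiff ℝ (⊤ : ℕ∞) (deriv ξ) := dstep _ hξ'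
  -- `HasDerivAt` for smooth functions
  have HD : ∀ f : ℝ → ℝ, ContDiff ℝ (⊤ : ℕ∞) f → ∀ y, HasDerivAt f (deriv f y) y :=
    fun f hf y => (hf.differentiable (by simp) y).hasDerivAt
  have it3 : ∀ g : ℝ → ℝ, iteratedDeriv 3 g = deriv (deriv (deriv g)) := by
    intro g
    rw [show (3 : ℕ) = 2 + 1 from rfl, iteratedDeriv_succ,
      show (2 : ℕ) = 1 + 1 from rfl, iteratedDeriv_succ, iteratedDeriv_one]
  -- first derivative of f₁ in terms of lf
  have e1 : deriv f₁ = fun y => f₁ y * lf y := by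
    funext y; rw [hlf]; field_simp; rw [mul_div_cancel_right₀ _ (hf₁ne y)]
  -- second derivative of f₁
  have e2 : deriv (deriv f₁) = fun y => f₁ y * (lf y ^ 2 + deriv lf y) := by
    funext y
    rw [e1]
    have h := ((HD _ hf' y).mul (HD _ hL y)).deriv
    erw [h]; rw [e1]; ring
  -- third derivative of f₁
  have e3 : ∀ y, deriv (deriv (deriv f₁)) y
      = f₁ y * (lf y ^ 3 + 3 * lf y * deriv lf y + deriv (deriv lf) y) := by
    intro y
    rw [e2]
    have h := ((HD _ hf' y).mul
      (((HD _ hL y).pow 2).add (HD _ hdL y))).deriv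
    erw [h]; rw [e1]; simp only [Pi.add_apply, Pi.pow_apply]; ring
  -- the f₁-equation in terms of lf
  have hR1 : ∀ y, lf y ^ 3 + 3 * lf y * deriv lf y + deriv (deriv lf) y
      + ξ y * lf y + η y = lam₁ ^ 2 := by
    intro y
    have h0 := hfeq y
    rw [it3, e3 y, e1] at h0
    apply mul_left_cancel₀ (hf₁ne y)
    simp only at h0
    linear_combination h0
  -- differentiated form of hR1
  have hR2 : ∀ y, 3 * lf y ^ 2 * deriv lf y + 3 * deriv lf y ^ 2
      + 3 * lf y * deriv (deriv lf) y + deriv (deriv (deriv lf)) y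
      + deriv ξ y * lf y + ξ y * deriv lf y + deriv η y = 0 := by
    intro y
    have hfun : (fun y => lf y ^ 3 + 3 * lf y * deriv lf y + deriv (deriv lf) y
        + ξ y * lf y + η y) = fun _ => lam₁ ^ 2 := funext hR1
    have h1 : HasDerivAt (fun y => lf y ^ 3 + 3 * lf y * deriv lf y
        + deriv (deriv lf) y + ξ y * lf y + η y)
        (3 * lf y ^ 2 * deriv lf y + (3 * deriv lf y ^ 2
          + 3 * lf y * deriv (deriv lf) y) + deriv (deriv (deriv lf)) y
          + (deriv ξ y * lf y + ξ y * deriv lf y) + deriv η y) y := by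
      have hp : HasDerivAt (fun y => lf y ^ 3) (3 * lf y ^ 2 * deriv lf y) y := by
        have := (HD _ hL y).pow 3
        exact this.congr_deriv (by push_cast; ring)
      exact ((((hp.add
        (((hasDerivAt_const y (3:ℝ)).mul (HD _ hL y)).mul (HD _ hdL y) |>.congr_deriv
          (by simp; ring))).add (HD _ hd2L y)).add
        ((HD _ hξ' y).mul (HD _ hL y))).add (HD _ hη' y))
    have h2 : HasDerivAt (fun y => lf y ^ 3 + 3 * lf y * deriv lf y
        + deriv (deriv lf) y + ξ y * lf y + η y) 0 y := by
      rw [hfun]; exact hasDerivAt_const y _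
    have := h1.unique h2
    linarith
  -- the φ-equation for the third derivative
  have hP3 : ∀ y, deriv (deriv (deriv φ)) y
      = lam ^ 2 * φ y - ξ y * deriv φ y - η y * φ y := by
    intro y
    have := hφeq y
    rw [it3] at this
    linarith
  -- differentiated φ-equation: fourth derivative
  have hP4 : ∀ y, deriv (deriv (deriv (deriv φ))) y
      = lam ^ 2 * deriv φ y - deriv ξ y * deriv φ y - ξ y * deriv (deriv φ) y
        - deriv η y * φ y - η y * deriv φ y := by
    intro y
    have hfun : deriv (deriv (deriv φ))
        = fun y => lam ^ 2 * φ y - ξ y * deriv φ y - η y * φ y := funext hP3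
    rw [hfun]
    have h1 : HasDerivAt (fun y => lam ^ 2 * φ y - ξ y * deriv φ y - η y * φ y)
        (lam ^ 2 * deriv φ y - (deriv ξ y * deriv φ y + ξ y * deriv (deriv φ) y)
          - (deriv η y * φ y + η y * deriv φ y)) y :=
      (((HD _ hφ' y).const_mul (lam ^ 2)).sub
        ((HD _ hξ' y).mul (HD _ hdφ y))).sub ((HD _ hη' y).mul (HD _ hφ' y))
    rw [h1.deriv]; ring
  -- derivatives of φ1
  have b1 : deriv φ1 = fun y => deriv (deriv φ) y
      - (deriv lf y * φ y + lf y * deriv φ y) := by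
    funext y
    rw [hφ1]
    exact ((HD _ hdφ y).sub ((HD _ hL y).mul (HD _ hφ' y))).deriv
  have b2 : deriv (deriv φ1) = fun y => deriv (deriv (deriv φ)) y
      - (deriv (deriv lf) y * φ y + 2 * deriv lf y * deriv φ y
        + lf y * deriv (deriv φ) y) := by
    funext y
    rw [b1]
    have h := ((HD _ hd2φ y).sub
      (((HD _ hdL y).mul (HD _ hφ' y)).add ((HD _ hL y).mul (HD _ hdφ y)))).deriv
    erw [h]; ring
  have b3 : ∀ y, deriv (deriv (deriv φ1)) y = deriv (deriv (deriv (deriv φ))) y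
      - (deriv (deriv (deriv lf)) y * φ y + 3 * deriv (deriv lf) y * deriv φ y
        + 3 * deriv lf y * deriv (deriv φ) y + lf y * deriv (deriv (deriv φ)) y) := by
    intro y
    rw [b2]
    have hd3φ : ContDiff ℝ (⊤ : ℕ∞) (deriv (deriv (deriv φ))) := dstep _ hd2φ
    have h := ((HD _ hd3φ y).sub
      ((((HD _ hd2L y).mul (HD _ hφ' y)).add
        (((hasDerivAt_const y (2:ℝ)).mul (HD _ hdL y)).mul (HD _ hdφ y))).add
        ((HD _ hL y).mul (HD _ hd2φ y)))).deriv
    erw [h]; simp; ring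
  -- derivative appearing in η1
  have hder : ∀ y, deriv (fun z => ξ z + (3 / 2) * (lf z) ^ 2 + 3 * deriv lf z) y
      = deriv ξ y + 3 * lf y * deriv lf y + 3 * deriv (deriv lf) y := by
    intro y
    have hp : HasDerivAt (fun z => (3 / 2 : ℝ) * (lf z) ^ 2)
        (3 * lf y * deriv lf y) y := by
      have h := ((HD _ hL y).pow 2).const_mul (3 / 2 : ℝ)
      refine h.congr_deriv ?_
      push_cast
      ring
    have h := (((HD _ hξ' y).add hp).add ((HD _ hdL y).const_mul (3:ℝ))).deriv
    erw [h]
  -- final computation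
  intro y
  rw [it3, b3 y, b1, hP4 y, hP3 y, hξ1, hη1, hφ1]
  simp only
  rw [hder y]
  linear_combination (-(φ y)) * hR2 y
end

section
/- (Plücker/Jacobi determinant identity) Let M be an N × (N-2) matrix and let g, f, b, d be column vectors in ℝ^N. Then det(M,g,f)·det(M,b,d) − det(M,g,b)·det(M,f,d) + det(M,g,d)·det(M,f,b) = 0. -/
/-!
Laplace expansion of a determinant with a repeated row shows that any `k + 1` vectors
`v₀, …, v_k` in `R^k` satisfy `∑ i, (-1)^i det(v₀, …, v̂ᵢ, …, v_k) • vᵢ = 0`. Take for the `vᵢ`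
the `n` columns of `M` followed by `f, b, d`, and apply the linear functional
`y ↦ det(M, g, y)`: it kills the columns of `M`, and the three remaining terms are the identity.
-/

theorem Fin.append_comp_succAbove_natAdd {α : Type*} {m k : ℕ} (a : Fin m → α)
    (b : Fin (k + 1) → α) (i : Fin (k + 1)) :
    Fin.append a b ∘ (Fin.natAdd m i).succAbove = Fin.append a (b ∘ i.succAbove) := by
  funext r
  refine Fin.addCases (fun r => ?_) (fun r => ?_) r
  · rw [Function.comp_apply, Fin.succAbove_of_castSucc_lt _ _ (by simp [Fin.lt_def]; omega),
      Fin.castSucc_castAdd, Fin.append_left, Fin.append_left]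
  · rcases lt_or_ge (Fin.castSucc r) i with h | h
    · rw [Function.comp_apply, Fin.succAbove_of_castSucc_lt _ _ (by simpa [Fin.lt_def] using h)]
      simp [Fin.succAbove_of_castSucc_lt _ _ h]
    · rw [Function.comp_apply, Fin.succAbove_of_le_castSucc _ _ (by simpa [Fin.le_def] using h),
        Fin.succ_natAdd]
      simp [Fin.succAbove_of_le_castSucc _ _ h]

namespace Matrix

theorem sum_neg_one_pow_mul_det_succAbove_smul_eq_zero {R : Type*} [CommRing R] {k : ℕ}
    (v : Fin (k + 1) → Fin k → R) :
    ∑ i : Fin (k + 1), ((-1) ^ (i : ℕ) * (of fun r => v (i.succAbove r)).det) • v i = 0 := by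
  ext j
  let B : Matrix (Fin (k + 1)) (Fin (k + 1)) R := of (Fin.cons (fun i => v i j) fun r i => v i r)
  have hB : B.det = 0 := det_zero_of_row_eq (Fin.succ_ne_zero j).symm (by funext i; simp [B])
  rw [det_succ_row_zero] at hB
  rw [Pi.zero_apply, ← hB, Finset.sum_apply]
  refine Finset.sum_congr rfl fun i _ => ?_
  have hminor : B.submatrix Fin.succ i.succAbove = (of fun r => v (i.succAbove r))ᵀ := by
    ext; simp [B]
  rw [hminor, det_transpose, Pi.smul_apply, smul_eq_mul]
  simp only [B, of_apply, Fin.cons_zero]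
  ring

section AppendPair

variable {R : Type*} [CommRing R] {k : ℕ} (u : Fin k → Fin (k + 2) → R)

theorem det_of_append_pair_eq_cramer (x y : Fin (k + 2) → R) :
    (of (Fin.append u ![x, y])).det = cramer (of (Fin.append u ![x, 0]))ᵀ y (Fin.natAdd k 1) := by
  rw [cramer_transpose_apply]
  congr 1
  ext i j
  refine Fin.addCases (fun i => ?_) (fun i => ?_) i
  · have hne : Fin.castAdd 2 i ≠ Fin.natAdd k 1 := by simp [Fin.ext_iff]; omega
    simp [updateRow_apply, hne]
  · fin_cases i <;> simp [updateRow_apply]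

theorem sum_mul_det_of_append_pair_eq_zero {ι : Type*} [Fintype ι] (x : Fin (k + 2) → R)
    (c : ι → R) (w : ι → Fin (k + 2) → R) (h : ∑ i, c i • w i = 0) :
    ∑ i, c i * (of (Fin.append u ![x, w i])).det = 0 := by
  have := congrArg (fun y => cramer (of (Fin.append u ![x, 0]))ᵀ y (Fin.natAdd k 1)) h
  simpa [map_sum, det_of_append_pair_eq_cramer u x] using this

theorem det_of_append_pair_right_row_eq_zero (x : Fin (k + 2) → R) (j : Fin k) :
    (of (Fin.append u ![x, u j])).det = 0 :=
  det_zero_of_row_eq (i := Fin.castAdd 2 j) (j := Fin.natAdd k 1) (by simp [Fin.ext_iff]; omega)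
    (by funext; simp)

theorem det_of_append_pair_plucker (g f b d : Fin (k + 2) → R) :
    (of (Fin.append u ![g, f])).det * (of (Fin.append u ![b, d])).det
      - (of (Fin.append u ![g, b])).det * (of (Fin.append u ![f, d])).det
      + (of (Fin.append u ![g, d])).det * (of (Fin.append u ![f, b])).det = 0 := by
  set v := Fin.append u ![f, b, d]
  have hexpand := sum_mul_det_of_append_pair_eq_zero u g _ v
    (sum_neg_one_pow_mul_det_succAbove_smul_eq_zero v)
  have hminor (i : Fin 3) : (of fun r => v ((Fin.natAdd k i).succAbove r)) =
      of (Fin.append u (![f, b, d] ∘ i.succAbove)) :=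
    congrArg of (Fin.append_comp_succAbove_natAdd u _ i)
  have hf : ![f, b, d] ∘ Fin.succAbove 0 = ![b, d] := by funext i; fin_cases i <;> rfl
  have hb : ![f, b, d] ∘ Fin.succAbove 1 = ![f, d] := by funext i; fin_cases i <;> rfl
  have hd : ![f, b, d] ∘ Fin.succAbove 2 = ![f, b] := by funext i; fin_cases i <;> rfl
  rw [Fin.sum_univ_add (a := k) (b := 3), Fin.sum_univ_three] at hexpand
  simp only [hminor, v, Fin.append_left, Fin.append_right, det_of_append_pair_right_row_eq_zero,
    mul_zero, Finset.sum_const_zero, zero_add, hf, hb, hd, Fin.val_natAdd, pow_add, Fin.val_zero,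
    Fin.val_one, Fin.val_two, cons_val_zero, cons_val_one, cons_val_two, head_cons,
    tail_cons] at hexpand
  refine (neg_one_pow_mul_eq_zero_iff (n := k)).mp ?_
  linear_combination hexpand

end AppendPair

theorem of_dite_eq_transpose_of_append {R : Type*} {m n : ℕ} (M : Matrix (Fin m) (Fin n) R)
    (x y : Fin m → R) :
    (of fun i (j : Fin (n + 2)) =>
        if h : (j : ℕ) < n then M i ⟨j, h⟩ else if (j : ℕ) = n then x i else y i) =
      (of (Fin.append Mᵀ ![x, y]))ᵀ := by
  ext i j
  refine Fin.addCases (fun j => ?_) (fun j => ?_) j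
  · simpa using (congrFun (Fin.append_left Mᵀ ![x, y] j) i).symm
  · fin_cases j
    · simpa using (congrFun (Fin.append_right Mᵀ ![x, y] 0) i).symm
    · simpa using (congrFun (Fin.append_right Mᵀ ![x, y] 1) i).symm

end Matrix

/-- Plücker/Jacobi determinant identity: for an `(n+2) × n` matrix `M` and
column vectors `g, f, b, d`,
`det(M,g,f)·det(M,b,d) − det(M,g,b)·det(M,f,d) + det(M,g,d)·det(M,f,b) = 0`. -/
theorem plucker_determinant_identity
    (n : ℕ) (M : Matrix (Fin (n + 2)) (Fin n) ℝ)
    (g f b d : Fin (n + 2) → ℝ)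
    (A : (Fin (n + 2) → ℝ) → (Fin (n + 2) → ℝ) → Matrix (Fin (n + 2)) (Fin (n + 2)) ℝ)
    (hA : A = fun (x y : Fin (n + 2) → ℝ) => Matrix.of fun (i j : Fin (n + 2)) =>
        if h : (j : ℕ) < n then M i ⟨j, h⟩
        else if (j : ℕ) = n then x i else y i) :
    (A g f).det * (A b d).det - (A g b).det * (A f d).det
      + (A g d).det * (A f b).det = 0 := by
  subst hA
  simp only [Matrix.of_dite_eq_transpose_of_append, Matrix.det_transpose]
  exact Matrix.det_of_append_pair_plucker M.transpose g f b d
end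

section
/- (Case N=2 of formula (p1)) Let f₁, f₂, g₁, g₂ be smooth with g_i' = f_i and ∂_τ f_i = k² g_i (i = 1,2), and W(f₁,f₂) ≠ 0. Then k² − (ln W(f₁,f₂))_{yτ} = k² · W(g₁,g₂) · W(f₁', f₂') / W(f₁,f₂)², where W(a,b) = a b' − a' b (derivatives in y). -/
/-- Partial derivative in the first ("y") variable. -/
noncomputable def pdy (f : ℝ × ℝ → ℝ) : ℝ × ℝ → ℝ :=
  fun p => deriv (fun y => f (y, p.2)) p.1

/-- Partial derivative in the second ("τ") variable. -/
noncomputable def pdτ (f : ℝ × ℝ → ℝ) : ℝ × ℝ → ℝ :=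
  fun p => deriv (fun τ => f (p.1, τ)) p.2

lemma hasDerivAt_sliceY {f : ℝ × ℝ → ℝ} (hf : ContDiff ℝ (⊤ : ℕ∞) f) (p : ℝ × ℝ) :
    HasDerivAt (fun y => f (y, p.2)) (fderiv ℝ f p ((1 : ℝ), (0 : ℝ))) p.1 := by
  have h1 : HasDerivAt (fun y : ℝ => (y, p.2)) ((1 : ℝ), (0 : ℝ)) p.1 :=
    HasDerivAt.prodMk (hasDerivAt_id _) (hasDerivAt_const _ _)
  have h2 := ((hf.differentiable (by simp)) (p.1, p.2)).hasFDerivAt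
  exact h2.comp_hasDerivAt p.1 h1

lemma hasDerivAt_sliceT {f : ℝ × ℝ → ℝ} (hf : ContDiff ℝ (⊤ : ℕ∞) f) (p : ℝ × ℝ) :
    HasDerivAt (fun τ => f (p.1, τ)) (fderiv ℝ f p ((0 : ℝ), (1 : ℝ))) p.2 := by
  have h1 : HasDerivAt (fun τ : ℝ => (p.1, τ)) ((0 : ℝ), (1 : ℝ)) p.2 :=
    HasDerivAt.prodMk (hasDerivAt_const _ _) (hasDerivAt_id _)
  have h2 := ((hf.differentiable (by simp)) (p.1, p.2)).hasFDerivAt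
  exact h2.comp_hasDerivAt p.2 h1

lemma pdy_eq_fderiv {f : ℝ × ℝ → ℝ} (hf : ContDiff ℝ (⊤ : ℕ∞) f) (p : ℝ × ℝ) :
    pdy f p = fderiv ℝ f p ((1 : ℝ), (0 : ℝ)) :=
  (hasDerivAt_sliceY hf p).deriv

lemma pdτ_eq_fderiv {f : ℝ × ℝ → ℝ} (hf : ContDiff ℝ (⊤ : ℕ∞) f) (p : ℝ × ℝ) :
    pdτ f p = fderiv ℝ f p ((0 : ℝ), (1 : ℝ)) :=
  (hasDerivAt_sliceT hf p).deriv

lemma contDiff_pdy {f : ℝ × ℝ → ℝ} (hf : ContDiff ℝ (⊤ : ℕ∞) f) : ContDiff ℝ (⊤ : ℕ∞) (pdy f) := by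
  have : pdy f = fun p => fderiv ℝ f p ((1 : ℝ), (0 : ℝ)) :=
    funext fun p => pdy_eq_fderiv hf p
  rw [this]
  exact (hf.fderiv_right (by simp)).clm_apply contDiff_const

lemma pdy_hasDerivAt {f : ℝ × ℝ → ℝ} (hf : ContDiff ℝ (⊤ : ℕ∞) f) (p : ℝ × ℝ) :
    HasDerivAt (fun y => f (y, p.2)) (pdy f p) p.1 := by
  rw [pdy_eq_fderiv hf p]; exact hasDerivAt_sliceY hf p

lemma pdτ_hasDerivAt {f : ℝ × ℝ → ℝ} (hf : ContDiff ℝ (⊤ : ℕ∞) f) (p : ℝ × ℝ) :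
    HasDerivAt (fun τ => f (p.1, τ)) (pdτ f p) p.2 := by
  rw [pdτ_eq_fderiv hf p]; exact hasDerivAt_sliceT hf p

lemma pdτ_pdy_comm {f : ℝ × ℝ → ℝ} (hf : ContDiff ℝ (⊤ : ℕ∞) f) (p : ℝ × ℝ) :
    pdτ (pdy f) p = pdy (pdτ f) p := by
  have hd : Differentiable ℝ f := hf.differentiable (by simp)
  have hf' : Differentiable ℝ (fderiv ℝ f) :=
    (hf.fderiv_right (m := (⊤ : ℕ∞)) (by simp)).differentiable (by simp)
  have hpdy : pdy f = fun q => fderiv ℝ f q ((1 : ℝ), (0 : ℝ)) :=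
    funext fun q => pdy_eq_fderiv hf q
  have hpdτ : pdτ f = fun q => fderiv ℝ f q ((0 : ℝ), (1 : ℝ)) :=
    funext fun q => pdτ_eq_fderiv hf q
  have h1 : pdτ (pdy f) p
      = fderiv ℝ (fderiv ℝ f) p ((0 : ℝ), (1 : ℝ)) ((1 : ℝ), (0 : ℝ)) := by
    rw [pdτ_eq_fderiv (contDiff_pdy hf) p, hpdy,
      fderiv_clm_apply (hf' p) (differentiableAt_const _)]
    simp
  have h2 : pdy (pdτ f) p
      = fderiv ℝ (fderiv ℝ f) p ((1 : ℝ), (0 : ℝ)) ((0 : ℝ), (1 : ℝ)) := by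
    have hpdτc : ContDiff ℝ (⊤ : ℕ∞) (pdτ f) := by
      rw [hpdτ]; exact (hf.fderiv_right (by simp)).clm_apply contDiff_const
    rw [pdy_eq_fderiv hpdτc p, hpdτ,
      fderiv_clm_apply (hf' p) (differentiableAt_const _)]
    simp
  rw [h1, h2]
  exact second_derivative_symmetric (fun y => (hd y).hasFDerivAt)
    (hf' p).hasFDerivAt _ _

lemma pdy_const_mul {f : ℝ × ℝ → ℝ} (hf : ContDiff ℝ (⊤ : ℕ∞) f) (c : ℝ) (q : ℝ × ℝ) :
    pdy (fun r => c * f r) q = c * pdy f q := by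
  exact ((pdy_hasDerivAt hf q).const_mul c).deriv

/-- Case `N = 2` of formula (p1):
`k² − (ln W(f₁,f₂))_{yτ} = k² W(g₁,g₂) W(f₁',f₂') / W(f₁,f₂)²`. -/
theorem p1_case_two
    (k : ℝ)
    (f₁ f₂ g₁ g₂ : ℝ × ℝ → ℝ)
    (hf₁ : ContDiff ℝ (⊤ : ℕ∞) f₁) (hf₂ : ContDiff ℝ (⊤ : ℕ∞) f₂)
    (hg₁ : ContDiff ℝ (⊤ : ℕ∞) g₁) (hg₂ : ContDiff ℝ (⊤ : ℕ∞) g₂)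
    (hgy₁ : ∀ p, pdy g₁ p = f₁ p) (hgy₂ : ∀ p, pdy g₂ p = f₂ p)
    (hfτ₁ : ∀ p, pdτ f₁ p = k ^ 2 * g₁ p) (hfτ₂ : ∀ p, pdτ f₂ p = k ^ 2 * g₂ p)
    (W Wg Wf' : ℝ × ℝ → ℝ)
    (hW : W = fun p => f₁ p * pdy f₂ p - pdy f₁ p * f₂ p)
    (hWg : Wg = fun p => g₁ p * pdy g₂ p - pdy g₁ p * g₂ p)
    (hWf' : Wf' = fun p => pdy f₁ p * pdy (pdy f₂) p - pdy (pdy f₁) p * pdy f₂ p)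
    (hWne : ∀ p, W p ≠ 0) :
    ∀ p, k ^ 2 - pdτ (fun q => pdy W q / W q) p
      = k ^ 2 * Wg p * Wf' p / (W p) ^ 2 := by
  intro p
  have hF₁ : ContDiff ℝ (⊤ : ℕ∞) (pdy f₁) := contDiff_pdy hf₁
  have hF₂ : ContDiff ℝ (⊤ : ℕ∞) (pdy f₂) := contDiff_pdy hf₂
  have hF₁y : ContDiff ℝ (⊤ : ℕ∞) (pdy (pdy f₁)) := contDiff_pdy hF₁
  have hF₂y : ContDiff ℝ (⊤ : ℕ∞) (pdy (pdy f₂)) := contDiff_pdy hF₂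
  -- τ-derivatives of pdy f i
  have hτF₁ : ∀ q, pdτ (pdy f₁) q = k ^ 2 * f₁ q := by
    intro q
    rw [pdτ_pdy_comm hf₁ q, funext hfτ₁, pdy_const_mul hg₁, hgy₁]
  have hτF₂ : ∀ q, pdτ (pdy f₂) q = k ^ 2 * f₂ q := by
    intro q
    rw [pdτ_pdy_comm hf₂ q, funext hfτ₂, pdy_const_mul hg₂, hgy₂]
  have hτF₁y : ∀ q, pdτ (pdy (pdy f₁)) q = k ^ 2 * pdy f₁ q := by
    intro q
    rw [pdτ_pdy_comm hF₁ q, funext hτF₁, pdy_const_mul hf₁]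
  have hτF₂y : ∀ q, pdτ (pdy (pdy f₂)) q = k ^ 2 * pdy f₂ q := by
    intro q
    rw [pdτ_pdy_comm hF₂ q, funext hτF₂, pdy_const_mul hf₂]
  -- pdy W formula
  have hpdyW : ∀ q, pdy W q
      = f₁ q * pdy (pdy f₂) q - pdy (pdy f₁) q * f₂ q := by
    intro q
    have h := ((pdy_hasDerivAt hf₁ q).mul (pdy_hasDerivAt hF₂ q)).sub
      ((pdy_hasDerivAt hF₁ q).mul (pdy_hasDerivAt hf₂ q))
    have h2 : pdy W q
        = pdy f₁ q * pdy f₂ q + f₁ q * pdy (pdy f₂) q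
          - (pdy (pdy f₁) q * f₂ q + pdy f₁ q * pdy f₂ q) := by
      show deriv (fun y => W (y, q.2)) q.1 = _
      rw [hW]
      exact h.deriv
    rw [h2]; ring
  -- τ-derivative of the quotient
  have hA : HasDerivAt (fun τ => pdy W (p.1, τ))
      ((k ^ 2 * g₁ p) * pdy (pdy f₂) p + f₁ p * (k ^ 2 * pdy f₂ p)
        - ((k ^ 2 * pdy f₁ p) * f₂ p + pdy (pdy f₁) p * (k ^ 2 * g₂ p))) p.2 := by
    have h := ((pdτ_hasDerivAt hf₁ p).mul (pdτ_hasDerivAt hF₂y p)).sub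
      ((pdτ_hasDerivAt hF₁y p).mul (pdτ_hasDerivAt hf₂ p))
    rw [hfτ₁, hfτ₂, hτF₂y, hτF₁y] at h
    have heq : (fun τ => pdy W (p.1, τ))
        = fun τ => f₁ (p.1, τ) * pdy (pdy f₂) (p.1, τ)
          - pdy (pdy f₁) (p.1, τ) * f₂ (p.1, τ) := by
      funext τ; exact hpdyW (p.1, τ)
    rw [heq]
    exact h
  have hB : HasDerivAt (fun τ => W (p.1, τ))
      ((k ^ 2 * g₁ p) * pdy f₂ p + f₁ p * (k ^ 2 * f₂ p)
        - ((k ^ 2 * f₁ p) * f₂ p + pdy f₁ p * (k ^ 2 * g₂ p))) p.2 := by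
    have h := ((pdτ_hasDerivAt hf₁ p).mul (pdτ_hasDerivAt hF₂ p)).sub
      ((pdτ_hasDerivAt hF₁ p).mul (pdτ_hasDerivAt hf₂ p))
    rw [hfτ₁, hfτ₂, hτF₂, hτF₁] at h
    have heq : (fun τ => W (p.1, τ))
        = fun τ => f₁ (p.1, τ) * pdy f₂ (p.1, τ)
          - pdy f₁ (p.1, τ) * f₂ (p.1, τ) := by
      funext τ; rw [hW]
    rw [heq]
    exact h
  have hWp : W (p.1, p.2) ≠ 0 := hWne (p.1, p.2)
  have hQ := hA.div hB hWp
  have hval : pdτ (fun q => pdy W q / W q) p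
      = (((k ^ 2 * g₁ p) * pdy (pdy f₂) p + f₁ p * (k ^ 2 * pdy f₂ p)
          - ((k ^ 2 * pdy f₁ p) * f₂ p + pdy (pdy f₁) p * (k ^ 2 * g₂ p))) * W p
        - pdy W p
          * ((k ^ 2 * g₁ p) * pdy f₂ p + f₁ p * (k ^ 2 * f₂ p)
            - ((k ^ 2 * f₁ p) * f₂ p + pdy f₁ p * (k ^ 2 * g₂ p)))) / W p ^ 2 := by
    exact hQ.deriv
  rw [hval, hpdyW p, hWg, hWf']
  simp only [hgy₁ p, hgy₂ p]
  have hWp2 : f₁ p * pdy f₂ p - pdy f₁ p * f₂ p ≠ 0 := by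
    have h := hWne p; simp only [hW] at h; exact h
  simp only [hW]
  field_simp
  ring
end

section
/- Asymptotics of the transformed eigenfunction: let f_j = e^{α_j y + c_j} + δ_j e^{β_j y + d_j} with α_j > β_j for all j, all Wronskians nonvanishing, and define φ¹[N] = W(f₁,…,f_N, 1)/W(f₁,…,f_N). Then φ¹[N](y) → (−1)^N ∏ α_j as y → +∞ and φ¹[N](y) → (−1)^N ∏ β_j as y → −∞. -/
/-!
Divide row `i` of each Wronskian matrix by the dominant exponential `p_i e^{a_i y}` (`a = α` at
`+∞`, `a = β` at `-∞`). The rows become `a_i^j + ε_i(y) b_i^j` with `ε_i → 0`, so the matrix of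
`W(f₁,…,f_N)` tends to the Vandermonde matrix of `a`, and the one with all derivatives shifted by
one tends to the same matrix with row `i` scaled by `a_i`; the ratio of determinants tends to
`∏ a_i`. Expanding `W(f₁,…,f_N,1)` along its constant row gives `(-1)^N` times the shifted one.
-/

open Filter Topology Matrix Real

theorem det_wronskian_snoc_one {𝕜 : Type*} [NontriviallyNormedField 𝕜] {n : ℕ}
    (f : Fin n → 𝕜 → 𝕜) (y : 𝕜) :
    det (of fun i j : Fin (n + 1) =>
        iteratedDeriv j ((Fin.snoc f (fun _ => 1) : Fin (n + 1) → 𝕜 → 𝕜) i) y) =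
      (-1) ^ n * det (of fun i j : Fin n => iteratedDeriv ((j : ℕ) + 1) (f i) y) := by
  rw [det_succ_row _ (Fin.last n), Fin.sum_univ_succ, Finset.sum_eq_zero]
  · simp [iteratedDeriv_const, submatrix, Fin.succAbove_last]
  · intro j _
    simp [iteratedDeriv_const]

theorem iteratedDeriv_two_exp (p a r b : ℝ) (k : ℕ) (y : ℝ) :
    iteratedDeriv k (fun y => p * exp (a * y) + r * exp (b * y)) y =
      a ^ k * (p * exp (a * y)) + b ^ k * (r * exp (b * y)) := by
  rw [iteratedDeriv_fun_add (by fun_prop) (by fun_prop), iteratedDeriv_const_mul_field,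
    iteratedDeriv_const_mul_field, iteratedDeriv_exp_const_mul, iteratedDeriv_exp_const_mul]
  ring

theorem tendsto_det_pow_succ_div_det_pow {n : ℕ} {ι : Type*} {l : Filter ι} {a : Fin n → ℝ}
    (ha : Function.Injective a) (b : Fin n → ℝ) {ε : ι → Fin n → ℝ} (hε : Tendsto ε l (𝓝 0)) :
    Tendsto (fun t =>
      det (of fun i j : Fin n => a i ^ ((j : ℕ) + 1) + ε t i * b i ^ ((j : ℕ) + 1)) /
        det (of fun i j : Fin n => a i ^ (j : ℕ) + ε t i * b i ^ (j : ℕ))) l (𝓝 (∏ i, a i)) := by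
  have hvdm : det (vandermonde a) ≠ 0 := det_vandermonde_ne_zero_iff.mpr ha
  have hshift : det (of fun i j : Fin n => a i ^ ((j : ℕ) + 1)) =
      (∏ i, a i) * det (vandermonde a) := by
    rw [← det_mul_column]
    congr 1
    ext i j
    simp [vandermonde_apply, pow_succ']
  have hcont : ContinuousAt (fun e : Fin n → ℝ =>
      det (of fun i j : Fin n => a i ^ ((j : ℕ) + 1) + e i * b i ^ ((j : ℕ) + 1)) /
        det (of fun i j : Fin n => a i ^ (j : ℕ) + e i * b i ^ (j : ℕ))) 0 := by
    refine ContinuousAt.div ?_ ?_ ?_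
    · exact (Continuous.matrix_det (continuous_matrix fun i j => by fun_prop)).continuousAt
    · exact (Continuous.matrix_det (continuous_matrix fun i j => by fun_prop)).continuousAt
    · simpa [vandermonde] using hvdm
  have hval :
      det (of fun i j : Fin n => a i ^ ((j : ℕ) + 1) + (0 : Fin n → ℝ) i * b i ^ ((j : ℕ) + 1)) /
        det (of fun i j : Fin n => a i ^ (j : ℕ) + (0 : Fin n → ℝ) i * b i ^ (j : ℕ)) =
      ∏ i, a i := by
    simp only [Pi.zero_apply, zero_mul, add_zero]
    exact (div_eq_iff hvdm).mpr hshift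
  exact hval ▸ hcont.tendsto.comp hε

theorem det_wronskian_two_exp {n : ℕ} {p a r b : Fin n → ℝ} (hp : ∀ i, p i ≠ 0)
    (k : ℕ) (y : ℝ) :
    det (of fun i j : Fin n =>
        iteratedDeriv ((j : ℕ) + k) (fun y => p i * exp (a i * y) + r i * exp (b i * y)) y) =
      (∏ i, p i * exp (a i * y)) * det (of fun i j : Fin n =>
        a i ^ ((j : ℕ) + k) + r i / p i * exp ((b i - a i) * y) * b i ^ ((j : ℕ) + k)) := by
  rw [← det_mul_column]
  congr 1
  ext i j
  have hexp : exp (b i * y) = exp (a i * y) * exp ((b i - a i) * y) := by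
    rw [← exp_add]
    ring_nf
  simp only [of_apply, iteratedDeriv_two_exp, hexp]
  field_simp [hp i]

theorem tendsto_wronskian_succ_div_wronskian_two_exp {n : ℕ} {l : Filter ℝ}
    {p a r b : Fin n → ℝ} (hp : ∀ i, p i ≠ 0) (ha : Function.Injective a)
    (hl : ∀ i, Tendsto (fun y => (b i - a i) * y) l atBot) {f : Fin n → ℝ → ℝ}
    (hf : f = fun i y => p i * exp (a i * y) + r i * exp (b i * y)) :
    Tendsto (fun y => det (of fun i j : Fin n => iteratedDeriv ((j : ℕ) + 1) (f i) y) /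
      det (of fun i j : Fin n => iteratedDeriv j (f i) y)) l (𝓝 (∏ i, a i)) := by
  subst hf
  have hε : Tendsto (fun y i => r i / p i * exp ((b i - a i) * y)) l (𝓝 0) := by
    refine tendsto_pi_nhds.mpr fun i => ?_
    simpa using ((tendsto_exp_atBot.comp (hl i)).const_mul (r i / p i))
  have hprod : ∀ y, ∏ i, p i * exp (a i * y) ≠ 0 := fun y =>
    Finset.prod_ne_zero_iff.mpr fun i _ => mul_ne_zero (hp i) (exp_ne_zero _)
  refine (tendsto_det_pow_succ_div_det_pow ha b hε).congr fun y => ?_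
  have hdet₀ := det_wronskian_two_exp (a := a) (r := r) (b := b) hp 0 y
  simp only [add_zero] at hdet₀
  beta_reduce
  rw [det_wronskian_two_exp hp 1 y, hdet₀, mul_div_mul_left _ _ (hprod y)]

theorem phi1_asymptotics_general
    (N : ℕ)
    (α β c d δ : Fin N → ℝ)
    (hαβ : ∀ j, β j < α j) (hδ : ∀ j, 0 < δ j)
    (hαα : ∀ i j, i ≠ j → α i ≠ α j)
    (hββ : ∀ i j, i ≠ j → β i ≠ β j)
    (f : Fin N → ℝ → ℝ)
    (hf : f = fun j y => Real.exp (α j * y + c j) + δ j * Real.exp (β j * y + d j))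
    (F : Fin (N + 1) → ℝ → ℝ)
    (hF : F = Fin.snoc f (fun _ => (1 : ℝ)))
    (WN WN1 φ : ℝ → ℝ)
    (hWN : WN = fun y => Matrix.det
        (Matrix.of fun i j : Fin N => iteratedDeriv (j : ℕ) (f i) y))
    (hWN1 : WN1 = fun y => Matrix.det
        (Matrix.of fun i j : Fin (N + 1) => iteratedDeriv (j : ℕ) (F i) y))
    (hφ : φ = fun y => WN1 y / WN y) :
    Filter.Tendsto φ Filter.atTop (nhds ((-1) ^ N * ∏ j, α j)) ∧
    Filter.Tendsto φ Filter.atBot (nhds ((-1) ^ N * ∏ j, β j)) := by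
  subst hφ hWN hWN1 hF
  simp only [det_wronskian_snoc_one, mul_div_assoc]
  constructor
  · refine (tendsto_wronskian_succ_div_wronskian_two_exp (p := fun j => exp (c j))
      (r := fun j => δ j * exp (d j)) (b := β) (fun j => exp_ne_zero _)
      (fun i j => not_imp_not.mp (hαα i j))
      (fun j => tendsto_id.const_mul_atTop_of_neg (sub_neg.mpr (hαβ j))) ?_).const_mul _
    rw [hf]
    funext j y
    simp only [exp_add]
    ring
  · refine (tendsto_wronskian_succ_div_wronskian_two_exp (p := fun j => δ j * exp (d j))
      (r := fun j => exp (c j)) (b := α) (fun j => (mul_pos (hδ j) (exp_pos _)).ne')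
      (fun i j => not_imp_not.mp (hββ i j))
      (fun j => tendsto_id.const_mul_atBot (sub_pos.mpr (hαβ j))) ?_).const_mul _
    rw [hf]
    funext j y
    simp only [exp_add]
    ring

/-- Asymptotics of `φ¹[N] = W(f₁,…,f_N,1)/W(f₁,…,f_N)` as `y → ±∞` for
two-exponential seed functions `f_j = e^{α_j y + c_j} + δ_j e^{β_j y + d_j}`. -/
theorem phi1_asymptotics
    (N : ℕ) (hN : 1 ≤ N)
    (α β c d δ : Fin N → ℝ)
    (hαβ : ∀ j, β j < α j) (hδ : ∀ j, 0 < δ j)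
    (hα0 : ∀ j, α j ≠ 0) (hβ0 : ∀ j, β j ≠ 0)
    (hαα : ∀ i j, i ≠ j → α i ≠ α j)
    (hββ : ∀ i j, i ≠ j → β i ≠ β j)
    (hαβ' : ∀ i j, α i ≠ β j)
    (f : Fin N → ℝ → ℝ)
    (hf : f = fun j y => Real.exp (α j * y + c j) + δ j * Real.exp (β j * y + d j))
    (F : Fin (N + 1) → ℝ → ℝ)
    (hF : F = Fin.snoc f (fun _ => (1 : ℝ)))
    (WN WN1 φ : ℝ → ℝ)
    (hWN : WN = fun y => Matrix.det
        (Matrix.of fun i j : Fin N => iteratedDeriv (j : ℕ) (f i) y))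
    (hWN1 : WN1 = fun y => Matrix.det
        (Matrix.of fun i j : Fin (N + 1) => iteratedDeriv (j : ℕ) (F i) y))
    (hWNne : ∀ y, WN y ≠ 0) (hWN1ne : ∀ y, WN1 y ≠ 0)
    (hφ : φ = fun y => WN1 y / WN y) :
    Filter.Tendsto φ Filter.atTop (nhds ((-1) ^ N * ∏ j, α j)) ∧
    Filter.Tendsto φ Filter.atBot (nhds ((-1) ^ N * ∏ j, β j)) :=
  phi1_asymptotics_general N α β c d δ hαβ hδ hαα hββ f hf F hF WN WN1 φ hWN hWN1 hφ
end
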